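/- The number of admissible ideals of the path algebra of the linearly oriented quiver of type A_{s+1} equals the Catalan number C_s = (1/(s+1))·binom(2s, s), via the bijection between such ideals and monotonic lattice paths in an s × s grid. -/

import Mathlib

/-!
An admissible ideal `T` is determined by its column heights: each column `{i | (i, j) ∈ T}` is an
initial segment `[0, h j)` of `ℕ`, and the closure conditions on `T` say exactly that `h` is
monotone with `h (k + 1) ≤ k`. So admissible ideals are the lattice paths of `s` columns below
the diagonal. Allowing `c` extra units of room above the diagonal, these ballot paths number
`C(2n + c, n) - C(2n + c, n + c + 1)`: either the first column has height `0` and can be deleted,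
or the whole path can be lowered by one, which gives a Pascal-type recursion. For `c = 0` the
difference is the Catalan number.
-/

theorem catalan_eq_choose_sub_choose (n : ℕ) :
    (catalan n : ℤ) = (2 * n).choose n - (2 * n).choose (n + 1) := by
  have hcat : (n + 1) * catalan n = (2 * n).choose n := succ_mul_catalan_eq_centralBinom n
  have hshift : (2 * n).choose (n + 1) * (n + 1) = (2 * n).choose n * n := by
    rw [Nat.choose_succ_right_eq, two_mul, Nat.add_sub_cancel]
  have hne : ((n : ℤ) + 1) ≠ 0 := by positivity
  apply mul_left_cancel₀ hne
  have hcat' : ((n : ℤ) + 1) * catalan n = (2 * n).choose n := by exact_mod_cast hcat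
  have hshift' : ((2 * n).choose (n + 1) : ℤ) * (n + 1) = (2 * n).choose n * n := by
    exact_mod_cast hshift
  linear_combination hcat' + hshift'

@[ext]
structure BallotPath (n c : ℕ) where
  height : Fin n → ℕ
  monotone : Monotone height
  le : ∀ k, height k ≤ k + c

namespace BallotPath

instance (n c : ℕ) : Finite (BallotPath n c) :=
  Finite.of_injective (fun p k => (⟨p.height k, by have := p.le k; omega⟩ : Fin (n + c)))
    fun _ _ hpq => BallotPath.ext <| funext fun k => congrArg Fin.val (congrFun hpq k)

lemma card_zero_length (c : ℕ) : Nat.card (BallotPath 0 c) = 1 :=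
  Nat.card_eq_one_iff_exists.mpr
    ⟨⟨Fin.elim0, fun k => k.elim0, fun k => k.elim0⟩, fun _ => BallotPath.ext <| funext (·.elim0)⟩

def tailEquiv (n c : ℕ) :
    {p : BallotPath (n + 1) c // p.height 0 = 0} ≃ BallotPath n (c + 1) where
  toFun p := ⟨Fin.tail p.1.height, fun _ _ hkl => p.1.monotone (Fin.succ_le_succ_iff.mpr hkl),
    fun k => by have := p.1.le k.succ; simp only [Fin.val_succ] at this; simp only [Fin.tail]; omega⟩
  invFun q := ⟨⟨Fin.cons 0 q.height, fun k l hkl => by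
      cases k using Fin.cases with
      | zero => simp
      | succ k =>
        cases l using Fin.cases with
        | zero => exact absurd hkl (by simp)
        | succ l => simpa using q.monotone (Fin.succ_le_succ_iff.mp hkl),
    fun k => by
      cases k using Fin.cases with
      | zero => simp
      | succ k => have := q.le k; simp only [Fin.cons_succ, Fin.val_succ]; omega⟩, rfl⟩
  left_inv p := Subtype.ext <| BallotPath.ext <| by
    simp only [← p.2]; exact Fin.cons_self_tail p.1.height
  right_inv _ := rfl

def predEquiv (n c : ℕ) :
    {p : BallotPath (n + 1) (c + 1) // p.height 0 ≠ 0} ≃ BallotPath (n + 1) c where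
  toFun p := ⟨fun k => p.1.height k - 1, fun _ _ hkl => Nat.sub_le_sub_right (p.1.monotone hkl) 1,
    fun k => by have := p.1.le k; omega⟩
  invFun q := ⟨⟨fun k => q.height k + 1, fun _ _ hkl => Nat.succ_le_succ (q.monotone hkl),
    fun k => by have := q.le k; omega⟩, Nat.succ_ne_zero _⟩
  left_inv p := Subtype.ext <| BallotPath.ext <| funext fun k => by
    have := p.1.monotone (Fin.zero_le k); have := p.2; dsimp only; omega
  right_inv _ := rfl

lemma card_succ_zero (n : ℕ) : Nat.card (BallotPath (n + 1) 0) = Nat.card (BallotPath n 1) := by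
  have : IsEmpty {p : BallotPath (n + 1) 0 // ¬p.height 0 = 0} :=
    ⟨fun p => p.2 (Nat.le_zero.mp (p.1.le 0))⟩
  rw [← Nat.card_congr (Equiv.sumCompl fun p : BallotPath (n + 1) 0 => p.height 0 = 0),
    Nat.card_sum, Nat.card_congr (tailEquiv n 0),
    Nat.card_of_isEmpty (α := {p : BallotPath (n + 1) 0 // ¬p.height 0 = 0}), add_zero]

lemma card_succ_succ (n c : ℕ) :
    Nat.card (BallotPath (n + 1) (c + 1)) =
      Nat.card (BallotPath n (c + 2)) + Nat.card (BallotPath (n + 1) c) := by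
  rw [← Nat.card_congr (Equiv.sumCompl fun p : BallotPath (n + 1) (c + 1) => p.height 0 = 0),
    Nat.card_sum, Nat.card_congr (tailEquiv n (c + 1)), Nat.card_congr (predEquiv n c)]

theorem card_eq_choose_sub_choose (n c : ℕ) :
    (Nat.card (BallotPath n c) : ℤ) = (2 * n + c).choose n - (2 * n + c).choose (n + c + 1) := by
  induction n generalizing c with
  | zero => simp [card_zero_length]
  | succ n ih =>
    induction c with
    | zero =>
      rw [card_succ_zero, ih 1]
      have h₁ := Nat.choose_succ_succ' (2 * n + 1) n
      have h₂ := Nat.choose_succ_succ' (2 * n + 1) (n + 1)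
      ring_nf at h₁ h₂ ⊢
      rw [h₁, h₂]
      push_cast
      ring
    | succ c ihc =>
      rw [card_succ_succ, Nat.cast_add, ih (c + 2), ihc]
      have h₁ := Nat.choose_succ_succ' (2 * n + c + 2) n
      have h₂ := Nat.choose_succ_succ' (2 * n + c + 2) (n + c + 2)
      ring_nf at h₁ h₂ ⊢
      rw [h₁, h₂]
      push_cast
      ring

theorem card_eq_catalan (n : ℕ) : Nat.card (BallotPath n 0) = catalan n := by
  have := card_eq_choose_sub_choose n 0
  rw [add_zero, add_zero, ← catalan_eq_choose_sub_choose] at this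
  exact_mod_cast this

end BallotPath

def IsAdmissibleIdeal (s : ℕ) (T : Set (ℕ × ℕ)) : Prop :=
  (∀ q ∈ T, q.1 + 2 ≤ q.2 ∧ q.2 ≤ s) ∧
    ∀ q ∈ T, ∀ i' j' : ℕ, i' ≤ q.1 → q.2 ≤ j' → j' ≤ s → (i', j') ∈ T

noncomputable def columnHeight (T : Set (ℕ × ℕ)) (j : ℕ) : ℕ :=
  sInf {i | (i, j) ∉ T}

/-- Column `k` of the path becomes column `k + 1` of the ideal: column `0` of an admissible ideal
is always empty. -/
def idealOfHeights {s : ℕ} (h : Fin s → ℕ) : Set (ℕ × ℕ) :=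
  {q | ∃ k : Fin s, (k : ℕ) + 1 = q.2 ∧ q.1 < h k}

namespace IsAdmissibleIdeal

variable {s : ℕ} {T : Set (ℕ × ℕ)}

lemma mem_iff_lt_columnHeight (hT : IsAdmissibleIdeal s T) {i j : ℕ} (hj : j ≤ s) :
    (i, j) ∈ T ↔ i < columnHeight T j := by
  have hne : {i | (i, j) ∉ T}.Nonempty := ⟨j, fun hjj => by have := (hT.1 _ hjj).1; omega⟩
  refine ⟨fun hij => lt_of_not_ge fun hle => Nat.sInf_mem hne ?_, fun hlt => ?_⟩
  · exact hT.2 _ hij _ _ hle le_rfl hj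
  · simpa using Nat.notMem_of_lt_sInf hlt

lemma columnHeight_mono (hT : IsAdmissibleIdeal s T) {j j' : ℕ} (hjj' : j ≤ j') (hj' : j' ≤ s) :
    columnHeight T j ≤ columnHeight T j' :=
  le_of_forall_lt fun i hi => (hT.mem_iff_lt_columnHeight hj').mp <|
    hT.2 _ ((hT.mem_iff_lt_columnHeight (hjj'.trans hj')).mpr hi) i j' le_rfl hjj' hj'

lemma columnHeight_succ_le (hT : IsAdmissibleIdeal s T) {k : ℕ} (hk : k < s) :
    columnHeight T (k + 1) ≤ k :=
  le_of_forall_lt fun i hi => by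
    have := (hT.1 _ ((hT.mem_iff_lt_columnHeight hk).mpr hi)).1
    omega

end IsAdmissibleIdeal

lemma isAdmissibleIdeal_idealOfHeights {s : ℕ} (p : BallotPath s 0) :
    IsAdmissibleIdeal s (idealOfHeights p.height) := by
  constructor
  · rintro ⟨i, j⟩ ⟨k, rfl, hi⟩
    have := p.le k
    omega
  · rintro ⟨i, j⟩ ⟨k, rfl, hi⟩ i' j' hi' hj' hj's
    dsimp only at hi' hj'
    refine ⟨⟨j' - 1, by omega⟩, Nat.sub_add_cancel (by omega), ?_⟩
    calc i' ≤ i := hi'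
      _ < p.height k := hi
      _ ≤ p.height ⟨j' - 1, _⟩ := p.monotone (Fin.le_def.mpr (by dsimp only; omega))

noncomputable def admissibleIdealEquiv (s : ℕ) :
    {T : Set (ℕ × ℕ) // IsAdmissibleIdeal s T} ≃ BallotPath s 0 where
  toFun T := ⟨fun k => columnHeight T.1 (k + 1),
    fun k l hkl => T.2.columnHeight_mono (by simpa using hkl) l.2,
    fun k => T.2.columnHeight_succ_le k.2⟩
  invFun p := ⟨idealOfHeights p.height, isAdmissibleIdeal_idealOfHeights p⟩
  left_inv T := by
    obtain ⟨T, hT⟩ := T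
    refine Subtype.ext <| Set.ext fun ⟨i, j⟩ => ⟨?_, fun hij => ?_⟩
    · rintro ⟨k, rfl, hi⟩
      exact (hT.mem_iff_lt_columnHeight k.2).mpr hi
    · have := hT.1 _ hij
      refine ⟨⟨j - 1, by omega⟩, Nat.sub_add_cancel (by omega), ?_⟩
      simpa [show j - 1 + 1 = j by omega] using (hT.mem_iff_lt_columnHeight this.2).mp hij
  right_inv p := BallotPath.ext <| funext fun k => eq_of_forall_lt_iff fun i => by
    rw [← (isAdmissibleIdeal_idealOfHeights p).mem_iff_lt_columnHeight k.2]
    exact ⟨fun ⟨k', hk', hi⟩ => Fin.ext (by simpa using hk') ▸ hi, fun hi => ⟨k, rfl, hi⟩⟩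

/-- The number of admissible (monomial) ideals of the path algebra of the linearly oriented
quiver of type `A_{s+1}` equals the Catalan number `C_s`. Here the vertices are `0, …, s`,
a path of length `≥ 2` is a pair `(i, j)` with `i + 2 ≤ j ≤ s`, and an admissible ideal is
a set `T` of such paths closed under multiplication by paths on either side (i.e. if
`(i, j) ∈ T`, `i' ≤ i` and `j ≤ j' ≤ s`, then `(i', j') ∈ T`); these ideals correspond to
monotonic lattice paths in an `s × s` grid. Moreover `C_s = (1/(s+1))·binom(2s, s)`. -/
theorem admissible_ideals_card_eq_catalan (s : ℕ) :
    Nat.card {T : Set (ℕ × ℕ) //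
        (∀ q ∈ T, q.1 + 2 ≤ q.2 ∧ q.2 ≤ s) ∧
        ∀ q ∈ T, ∀ i' j' : ℕ, i' ≤ q.1 → q.2 ≤ j' → j' ≤ s → (i', j') ∈ T} =
      catalan s ∧ (s + 1) * catalan s = (2 * s).choose s :=
  ⟨(Nat.card_congr (admissibleIdealEquiv s)).trans (BallotPath.card_eq_catalan s),
    succ_mul_catalan_eq_centralBinom s⟩
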